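/- Complementary-dual principle (Gaussian case): suppose σ̄ ∈ (-y, w - y) satisfies both (x - F(σ̄)/G(σ̄))² = -2α²·ln((σ̄+y)/w) and G(σ̄) ≠ 0, where G(σ) = β - (σ²+yσ)/α² and F(σ) = -x(σ²+yσ)/α². Then c̄ = F(σ̄)/G(σ̄) is a critical point of P(c) = (1/2)(w·exp(-(x-c)²/(2α²)) - y)² + (1/2)βc², and P(c̄) = P^d(σ̄), where P^d(σ) = -(1/2)F(σ)²/G(σ) - ln((σ+y)/w)·(σ² + yσ) + (1/2)σ² - x²(σ² + yσ)/(2α²). -/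

import Mathlib

/-!
Write `s = σ̄² + yσ̄` and `c̄ = F(σ̄)/G(σ̄)`. The dual condition says exactly that the Gaussian
`w·exp(-(x - c̄)²/(2α²))` takes the value `σ̄ + y` at `c̄`. Clearing the denominator in
`c̄·G(σ̄) = F(σ̄)` gives `β c̄ = (c̄ - x)·s/α²`, and with these two facts both `P'(c̄)` and
`P(c̄) - P^d(σ̄)` reduce to polynomial identities.
-/

noncomputable def primalP (w x y α β c : ℝ) : ℝ :=
  (1/2) * (w * Real.exp (-(x - c)^2 / (2 * α^2)) - y)^2 + (1/2) * β * c^2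

noncomputable def dualG (y α β σ : ℝ) : ℝ := β - (σ^2 + y * σ) / α^2

noncomputable def dualF (x y α σ : ℝ) : ℝ := -x * (σ^2 + y * σ) / α^2

noncomputable def dualPd (w x y α β σ : ℝ) : ℝ :=
  -(1/2) * (dualF x y α σ)^2 / (dualG y α β σ)
    - Real.log ((σ + y) / w) * (σ^2 + y * σ)
    + (1/2) * σ^2 - x^2 * (σ^2 + y * σ) / (2 * α^2)

open Real

theorem hasDerivAt_primalP (w x y α β c : ℝ) :
    HasDerivAt (primalP w x y α β)
      ((w * exp (-(x - c) ^ 2 / (2 * α ^ 2)) - y) * (w * exp (-(x - c) ^ 2 / (2 * α ^ 2))) *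
        (x - c) / α ^ 2 + β * c) c := by
  have hexponent : HasDerivAt (fun c => -(x - c) ^ 2 / (2 * α ^ 2)) ((x - c) / α ^ 2) c := by
    refine ((((hasDerivAt_id c).const_sub x).pow 2).neg.div_const (2 * α ^ 2)).congr_deriv ?_
    rw [← mul_div_mul_left (x - c) (α ^ 2) two_ne_zero]
    simp only [id, Nat.cast_ofNat]
    ring
  refine (((((hexponent.exp.const_mul w).sub_const y).pow 2).const_mul (1 / 2)).add
    ((hasDerivAt_pow 2 c).const_mul (1 / 2 * β))).congr_deriv ?_
  simp only [Nat.cast_ofNat]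
  ring

theorem beta_mul_eq_of_mul_dualG_eq {x y α β σ c : ℝ} (hc : c * dualG y α β σ = dualF x y α σ) :
    β * c = (c - x) * (σ ^ 2 + y * σ) / α ^ 2 := by
  simp only [dualF, dualG] at hc
  linear_combination hc

theorem log_eq_neg_sq_div_of_sq_eq {x α c t : ℝ} (hα : α ≠ 0)
    (hcond : (x - c) ^ 2 = -2 * α ^ 2 * log t) :
    log t = -(x - c) ^ 2 / (2 * α ^ 2) := by
  rw [hcond]
  field_simp

theorem mul_exp_eq_of_sq_eq_log {w x y α σ c : ℝ} (hw : 0 < w) (hα : α ≠ 0) (hσ : 0 < σ + y)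
    (hcond : (x - c) ^ 2 = -2 * α ^ 2 * log ((σ + y) / w)) :
    w * exp (-(x - c) ^ 2 / (2 * α ^ 2)) = σ + y := by
  rw [← log_eq_neg_sq_div_of_sq_eq hα hcond, exp_log (div_pos hσ hw), mul_div_cancel₀ _ hw.ne']

theorem dualPd_eq_of_mul_dualG_eq {w x y α β σ c : ℝ} (hα : α ≠ 0) (hG : dualG y α β σ ≠ 0)
    (hc : c * dualG y α β σ = dualF x y α σ)
    (hcond : (x - c) ^ 2 = -2 * α ^ 2 * log ((σ + y) / w)) :
    dualPd w x y α β σ = σ ^ 2 / 2 + β * c ^ 2 / 2 := by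
  have hsq : (c * dualG y α β σ) ^ 2 / dualG y α β σ = c ^ 2 * dualG y α β σ := by
    field_simp
  rw [dualPd, log_eq_neg_sq_div_of_sq_eq hα hcond, ← hc, mul_div_assoc, hsq, dualG]
  linear_combination (-c) * beta_mul_eq_of_mul_dualG_eq hc

theorem complementary_dual_principle_gaussian_general
    (w x y α β sb : ℝ) (hw : 0 < w)
    (hα : α ≠ 0)
    (hmem : sb ∈ Set.Ioo (-y) (w - y))
    (hG : dualG y α β sb ≠ 0)
    (hcond : (x - dualF x y α sb / dualG y α β sb)^2 =
      -2 * α^2 * Real.log ((sb + y) / w)) :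
    deriv (fun c => primalP w x y α β c) (dualF x y α sb / dualG y α β sb) = 0 ∧
    primalP w x y α β (dualF x y α sb / dualG y α β sb) = dualPd w x y α β sb := by
  have hc : dualF x y α sb / dualG y α β sb * dualG y α β sb = dualF x y α sb :=
    div_mul_cancel₀ _ hG
  generalize dualF x y α sb / dualG y α β sb = c at hc hcond ⊢
  have hgauss := mul_exp_eq_of_sq_eq_log hw hα (by linarith [hmem.1]) hcond
  constructor
  · rw [(hasDerivAt_primalP w x y α β c).deriv, hgauss]
    linear_combination beta_mul_eq_of_mul_dualG_eq hc
  · rw [dualPd_eq_of_mul_dualG_eq hα hG hc hcond, primalP, hgauss]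
    ring

/-- Complementary-dual principle, Gaussian case: if σ̄ ∈ (-y, w-y) satisfies the
dual critical condition (x - F(σ̄)/G(σ̄))² = -2α²·ln((σ̄+y)/w) and G(σ̄) ≠ 0, then
c̄ = F(σ̄)/G(σ̄) is a critical point of the primal and P(c̄) = P^d(σ̄). -/
theorem complementary_dual_principle_gaussian
    (w x y α β sb : ℝ) (hw : 0 < w) (hy : 0 < y) (hyw : y < w)
    (hα : α ≠ 0) (hβ : 0 < β)
    (hmem : sb ∈ Set.Ioo (-y) (w - y))
    (hG : dualG y α β sb ≠ 0)
    (hcond : (x - dualF x y α sb / dualG y α β sb)^2 =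
      -2 * α^2 * Real.log ((sb + y) / w)) :
    deriv (fun c => primalP w x y α β c) (dualF x y α sb / dualG y α β sb) = 0 ∧
    primalP w x y α β (dualF x y α sb / dualG y α β sb) = dualPd w x y α β sb :=
  complementary_dual_principle_gaussian_general w x y α β sb hw hα hmem hG hcond
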